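/- Let G be a finitely generated group and X a bounded Banach G-module. Then there exists a bounded linear map E : ℓ∞(G, ℓ∞(G, X*)) → ℓ∞(G, X*) (a weak invariant expectation) such that: (1) E(g ⋆ f) = g * (E f) for every g ∈ G and f ∈ ℓ∞(G, ℓ∞(G, X*)); (2) E(a · f) = a • E(f) for every a ∈ ℓ∞(G) and f ∈ ℓ∞(G, ℓ∞(G, X*)); and (3) there exists a sequence ξ_n ∈ ℓ∞(G, ℓ∞(G)), each finitely supported, nonnegative as a function on G × G, and satisfying ∑_{g∈G} (ξ_n)_g = 1_G (the constant function 1), such that for every f ∈ ℓ∞(G, ℓ∞(G, X*)) the elements ⟨ξ_n, f⟩ converge to E f in the weak-* topology of ℓ∞(G, X*) as the dual of ℓ₁(G, X). -/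

import Mathlib

open scoped ENNReal
set_option linter.unusedSectionVars false

noncomputable section

variable {G : Type*} [Group G]
variable {Z : Type*} [NormedAddCommGroup Z] [NormedSpace ℝ Z]
variable {X : Type*} [NormedAddCommGroup X] [NormedSpace ℝ X]

/-- Build an element of `ℓ∞(G, Z)` from a uniformly bounded function. -/
def linfElem (f : G → Z) (C : ℝ) (h : ∀ g, ‖f g‖ ≤ C) :
    lp (fun _ : G => Z) ∞ :=
  ⟨f, memℓp_infty ⟨C, by rintro r ⟨g, rfl⟩; exact h g⟩⟩

@[simp] lemma linfElem_apply (f : G → Z) (C : ℝ) (h : ∀ g, ‖f g‖ ≤ C) (g : G) :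
    linfElem f C h g = f g := rfl

/-- The action `•` of `ℓ∞(G)` on `ℓ∞(G, Z)`: `(a • f)_g = a_g f_g`. -/
def bullet (a : lp (fun _ : G => ℝ) ∞) (f : lp (fun _ : G => Z) ∞) :
    lp (fun _ : G => Z) ∞ :=
  linfElem (fun g => a g • f g) (‖a‖ * ‖f‖) (by
    intro g
    rw [norm_smul]
    exact mul_le_mul (lp.norm_apply_le_norm ENNReal.top_ne_zero a g)
      (lp.norm_apply_le_norm ENNReal.top_ne_zero f g) (norm_nonneg _) (norm_nonneg _))

lemma bullet_norm_le (a : lp (fun _ : G => ℝ) ∞) (f : lp (fun _ : G => Z) ∞) :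
    ‖bullet a f‖ ≤ ‖a‖ * ‖f‖ :=
  lp.norm_le_of_forall_le (mul_nonneg (norm_nonneg _) (norm_nonneg _)) fun g => by
    rw [bullet]; simp only [linfElem_apply]
    rw [norm_smul]
    exact mul_le_mul (lp.norm_apply_le_norm ENNReal.top_ne_zero a g)
      (lp.norm_apply_le_norm ENNReal.top_ne_zero f g) (norm_nonneg _) (norm_nonneg _)

/-- The action of `G` on `ℓ∞(G, X*)` given by `(g * f)_h = g (f_{g⁻¹h})`, where `G` acts
on `X* ` by the dual action `(gφ)(x) = φ(g⁻¹ x)` of a representation `ρ` of `G` on `X`. -/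
def starA (ρ : G →* X →L[ℝ] X) (g : G) (φ : lp (fun _ : G => X →L[ℝ] ℝ) ∞) :
    lp (fun _ : G => X →L[ℝ] ℝ) ∞ :=
  linfElem (fun h => (φ (g⁻¹ * h)).comp (ρ g⁻¹)) (‖ρ g⁻¹‖ * ‖φ‖) (by
    intro h
    calc ‖(φ (g⁻¹ * h)).comp (ρ g⁻¹)‖ ≤ ‖φ (g⁻¹ * h)‖ * ‖ρ g⁻¹‖ :=
          ContinuousLinearMap.opNorm_comp_le _ _
      _ ≤ ‖ρ g⁻¹‖ * ‖φ‖ := by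
          rw [mul_comm]
          gcongr
          exact lp.norm_apply_le_norm ENNReal.top_ne_zero φ _)

lemma starA_norm_le (ρ : G →* X →L[ℝ] X) (g : G) (φ : lp (fun _ : G => X →L[ℝ] ℝ) ∞) :
    ‖starA ρ g φ‖ ≤ ‖ρ g⁻¹‖ * ‖φ‖ :=
  lp.norm_le_of_forall_le (mul_nonneg (norm_nonneg _) (norm_nonneg _)) fun h => by
    rw [starA]; simp only [linfElem_apply]
    calc ‖(φ (g⁻¹ * h)).comp (ρ g⁻¹)‖ ≤ ‖φ (g⁻¹ * h)‖ * ‖ρ g⁻¹‖ :=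
          ContinuousLinearMap.opNorm_comp_le _ _
      _ ≤ ‖ρ g⁻¹‖ * ‖φ‖ := by
          rw [mul_comm]
          gcongr
          exact lp.norm_apply_le_norm ENNReal.top_ne_zero φ _

/-- The action `⋆` of `G` on `ℓ∞(G, ℓ∞(G, X*))`: `(g ⋆ f)_h = g * (f_{g⁻¹h})`. -/
def starB (ρ : G →* X →L[ℝ] X) (g : G)
    (f : lp (fun _ : G => lp (fun _ : G => X →L[ℝ] ℝ) ∞) ∞) :
    lp (fun _ : G => lp (fun _ : G => X →L[ℝ] ℝ) ∞) ∞ :=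
  linfElem (fun h => starA ρ g (f (g⁻¹ * h))) (‖ρ g⁻¹‖ * ‖f‖) (by
    intro h
    refine (starA_norm_le ρ g _).trans ?_
    gcongr
    exact lp.norm_apply_le_norm ENNReal.top_ne_zero f _)

/-- The action of `ℓ∞(G)` on `ℓ∞(G, ℓ∞(G, X*))`: `(a · f)_g = a • f_g`. -/
def dotB (a : lp (fun _ : G => ℝ) ∞)
    (f : lp (fun _ : G => lp (fun _ : G => Z) ∞) ∞) :
    lp (fun _ : G => lp (fun _ : G => Z) ∞) ∞ :=
  linfElem (fun g => bullet a (f g)) (‖a‖ * ‖f‖) (by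
    intro g
    refine (bullet_norm_le a (f g)).trans ?_
    gcongr
    exact lp.norm_apply_le_norm ENNReal.top_ne_zero f _)

end

/-! The diagonal `f ↦ (h ↦ f_h(h))` intertwines `⋆` with `*` and `·` with `•` by direct
computation. For the approximating sequence, enumerate the countable group `G`, let `σ_n` fix its
first `n` elements and send the others to `1`, and put `(ξ_n)_g(h) = [g = σ_n h]`. Then
`⟨ξ_n, f⟩_h = f_{σ_n h}(h)` is eventually `f_h(h)` for each `h`, and dominated convergence against
`η ∈ ℓ₁(G, X)` gives the weak-* convergence. -/

open Filter

noncomputable section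

lemma Group.FG.countable (G : Type*) [Group G] [Group.FG G] : Countable G := by
  obtain ⟨S, hS, φ, hφ⟩ := Group.fg_iff_exists_freeGroup_hom_surjective.mp ‹Group.FG G›
  have : Countable S := hS.countable.to_subtype
  exact hφ.countable

section Diagonal

variable {G : Type*} {Z : Type*} [NormedAddCommGroup Z] [NormedSpace ℝ Z]

lemma norm_apply_apply_le (f : lp (fun _ : G => lp (fun _ : G => Z) ∞) ∞) (g h : G) :
    ‖f g h‖ ≤ ‖f‖ :=
  (lp.norm_apply_le_norm ENNReal.top_ne_zero (f g) h).trans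
    (lp.norm_apply_le_norm ENNReal.top_ne_zero f g)

def diagonal : lp (fun _ : G => lp (fun _ : G => Z) ∞) ∞ →L[ℝ] lp (fun _ : G => Z) ∞ :=
  LinearMap.mkContinuous
    { toFun := fun f => linfElem (fun h => f h h) ‖f‖ fun h => norm_apply_apply_le f h h
      map_add' := fun _ _ => rfl
      map_smul' := fun _ _ => rfl }
    1 fun f => by
      rw [one_mul]
      exact lp.norm_le_of_forall_le (norm_nonneg f) fun h => norm_apply_apply_le f h h

@[simp] lemma diagonal_apply (f : lp (fun _ : G => lp (fun _ : G => Z) ∞) ∞) (h : G) :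
    diagonal f h = f h h := rfl

lemma diagonal_dotB [Group G] (a : lp (fun _ : G => ℝ) ∞)
    (f : lp (fun _ : G => lp (fun _ : G => Z) ∞) ∞) :
    diagonal (dotB a f) = bullet a (diagonal f) := rfl

end Diagonal

lemma diagonal_starB {G : Type*} [Group G] {X : Type*} [NormedAddCommGroup X] [NormedSpace ℝ X]
    (ρ : G →* X →L[ℝ] X) (g : G) (f : lp (fun _ : G => lp (fun _ : G => X →L[ℝ] ℝ) ∞) ∞) :
    diagonal (starB ρ g f) = starA ρ g (diagonal f) := rfl

section Selection

variable {G : Type*} [DecidableEq G]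

def selection (σ : G → G) : lp (fun _ : G => lp (fun _ : G => ℝ) ∞) ∞ :=
  linfElem (fun g => linfElem (fun h => if g = σ h then 1 else 0) 1 fun h => by
      split_ifs <;> norm_num) 1
    fun g => lp.norm_le_of_forall_le zero_le_one fun h => by
      simp only [linfElem_apply]
      split_ifs <;> norm_num

lemma selection_apply (σ : G → G) (g h : G) :
    selection σ g h = if g = σ h then 1 else 0 := rfl

lemma selection_nonneg (σ : G → G) (g h : G) : 0 ≤ selection σ g h := by
  rw [selection_apply]
  split_ifs <;> norm_num

lemma hasSum_selection (σ : G → G) (h : G) : HasSum (fun g => selection σ g h) 1 := by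
  simp only [selection_apply]
  exact hasSum_ite_eq (σ h) 1

lemma support_selection_subset (σ : G → G) : {g | selection σ g ≠ 0} ⊆ Set.range σ := by
  intro g hg
  by_contra hσ
  refine hg (lp.ext (funext fun h => ?_))
  rw [selection_apply, if_neg fun hgh => hσ ⟨h, hgh.symm⟩]
  rfl

lemma tsum_selection_smul {Z : Type*} [NormedAddCommGroup Z] [NormedSpace ℝ Z] (σ : G → G)
    (f : lp (fun _ : G => lp (fun _ : G => Z) ∞) ∞) (h : G) :
    ∑' g, selection σ g h • f g h = f (σ h) h := by
  rw [tsum_eq_single (σ h) fun g hg => by rw [selection_apply, if_neg hg, zero_smul],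
    selection_apply, if_pos rfl, one_smul]

end Selection

lemma tendsto_tsum_apply_comp_of_eventually_eq {G : Type*} {X : Type*} [NormedAddCommGroup X]
    [NormedSpace ℝ X] {ι : Type*} {l : Filter ι} (σ : ι → G → G)
    (hσ : ∀ h, ∀ᶠ n in l, σ n h = h) (f : lp (fun _ : G => lp (fun _ : G => X →L[ℝ] ℝ) ∞) ∞)
    (η : lp (fun _ : G => X) 1) :
    Tendsto (fun n => ∑' h, f (σ n h) h (η h)) l (nhds (∑' h, f h h (η h))) := by
  have hη : Summable fun h => ‖η h‖ := by
    simpa using (lp.memℓp η).summable (p := 1) (by norm_num)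
  refine tendsto_tsum_of_dominated_convergence (hη.mul_left ‖f‖)
    (fun h => tendsto_const_nhds.congr' ?_) (Eventually.of_forall fun n h => ?_)
  · filter_upwards [hσ h] with n hn
    rw [hn]
  · calc ‖f (σ n h) h (η h)‖ ≤ ‖f (σ n h) h‖ * ‖η h‖ := (f (σ n h) h).le_opNorm _
      _ ≤ ‖f‖ * ‖η h‖ := by gcongr; exact norm_apply_apply_le f _ _

section Truncation

variable {G : Type*} [One G]

open scoped Classical in
def truncation (F : Set G) (h : G) : G := if h ∈ F then h else 1

lemma range_truncation_subset (F : Set G) :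
    Set.range (truncation F) ⊆ insert 1 F := by
  rintro _ ⟨h, rfl⟩
  unfold truncation
  split_ifs with hF
  exacts [Or.inr hF, Or.inl rfl]

lemma eventually_truncation_eq {u : ℕ → G} (hu : Function.Surjective u) (h : G) :
    ∀ᶠ n in atTop, truncation (u '' Set.Iic n) h = h := by
  obtain ⟨k, rfl⟩ := hu h
  filter_upwards [eventually_ge_atTop k] with n hn
  exact if_pos ⟨k, hn, rfl⟩

end Truncation

end

theorem weak_invariant_expectation_exists_general
    {G : Type*} [Group G] [Group.FG G]
    {X : Type*} [NormedAddCommGroup X] [NormedSpace ℝ X]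
    (ρ : G →* X →L[ℝ] X) :
    ∃ E : lp (fun _ : G => lp (fun _ : G => X →L[ℝ] ℝ) ∞) ∞ →L[ℝ]
          lp (fun _ : G => X →L[ℝ] ℝ) ∞,
      (∀ (g : G) (f : lp (fun _ : G => lp (fun _ : G => X →L[ℝ] ℝ) ∞) ∞),
          E (starB ρ g f) = starA ρ g (E f)) ∧
      (∀ (a : lp (fun _ : G => ℝ) ∞) (f : lp (fun _ : G => lp (fun _ : G => X →L[ℝ] ℝ) ∞) ∞),
          E (dotB a f) = bullet a (E f)) ∧
      (∃ ξ : ℕ → lp (fun _ : G => lp (fun _ : G => ℝ) ∞) ∞,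
        (∀ n : ℕ, {g : G | ξ n g ≠ 0}.Finite) ∧
        (∀ (n : ℕ) (g h : G), 0 ≤ ξ n g h) ∧
        (∀ (n : ℕ) (h : G), HasSum (fun g : G => ξ n g h) 1) ∧
        (∀ (f : lp (fun _ : G => lp (fun _ : G => X →L[ℝ] ℝ) ∞) ∞)
            (η : lp (fun _ : G => X) 1),
          Filter.Tendsto
            (fun n : ℕ => ∑' h : G, (∑' g : G, ξ n g h • f g h) (η h))
            Filter.atTop
            (nhds (∑' h : G, (E f) h (η h))))) := by
  classical
  have := Group.FG.countable G
  obtain ⟨u, hu⟩ := exists_surjective_nat G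
  let σ : ℕ → G → G := fun n => truncation (u '' Set.Iic n)
  refine ⟨diagonal, diagonal_starB ρ, diagonal_dotB, fun n => selection (σ n),
    fun n => ?_, fun n => selection_nonneg (σ n), fun n => hasSum_selection (σ n), fun f η => ?_⟩
  · exact (((Set.finite_Iic n).image u).insert 1).subset
      ((support_selection_subset _).trans (range_truncation_subset _))
  · simp only [tsum_selection_smul, diagonal_apply]
    exact tendsto_tsum_apply_comp_of_eventually_eq σ (eventually_truncation_eq hu) f η

/-- **Existence of weak invariant expectations.**  Let `G` be a finitely generated group and
`X` a bounded Banach `G`-module (a Banach space with a representation `ρ` of `G` by bounded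
operators with `sup_g ‖ρ g‖ < ∞`).  Then there is a bounded linear map
`E : ℓ∞(G, ℓ∞(G, X*)) → ℓ∞(G, X*)` such that
(1) `E (g ⋆ f) = g * (E f)`;
(2) `E (a · f) = a • (E f)` for all `a ∈ ℓ∞(G)`; and
(3) there is a sequence `ξ n ∈ ℓ∞(G, ℓ∞(G))`, each finitely supported, nonnegative on `G × G`
and with `∑_g (ξ n)_g = 1_G`, such that `⟨ξ n, f⟩ → E f` weak-* in `ℓ∞(G, X*) = ℓ₁(G, X)*`
for every `f`, where `⟨ξ, f⟩(h) = ∑_g ξ(g)(h) • f(g)(h)`. -/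
theorem weak_invariant_expectation_exists
    {G : Type*} [Group G] [Group.FG G]
    {X : Type*} [NormedAddCommGroup X] [NormedSpace ℝ X] [CompleteSpace X]
    (ρ : G →* X →L[ℝ] X) (C : ℝ) (hρ : ∀ g : G, ‖ρ g‖ ≤ C) :
    ∃ E : lp (fun _ : G => lp (fun _ : G => X →L[ℝ] ℝ) ∞) ∞ →L[ℝ]
          lp (fun _ : G => X →L[ℝ] ℝ) ∞,
      (∀ (g : G) (f : lp (fun _ : G => lp (fun _ : G => X →L[ℝ] ℝ) ∞) ∞),
          E (starB ρ g f) = starA ρ g (E f)) ∧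
      (∀ (a : lp (fun _ : G => ℝ) ∞) (f : lp (fun _ : G => lp (fun _ : G => X →L[ℝ] ℝ) ∞) ∞),
          E (dotB a f) = bullet a (E f)) ∧
      (∃ ξ : ℕ → lp (fun _ : G => lp (fun _ : G => ℝ) ∞) ∞,
        (∀ n : ℕ, {g : G | ξ n g ≠ 0}.Finite) ∧
        (∀ (n : ℕ) (g h : G), 0 ≤ ξ n g h) ∧
        (∀ (n : ℕ) (h : G), HasSum (fun g : G => ξ n g h) 1) ∧
        (∀ (f : lp (fun _ : G => lp (fun _ : G => X →L[ℝ] ℝ) ∞) ∞)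
            (η : lp (fun _ : G => X) 1),
          Filter.Tendsto
            (fun n : ℕ => ∑' h : G, (∑' g : G, ξ n g h • f g h) (η h))
            Filter.atTop
            (nhds (∑' h : G, (E f) h (η h))))) :=
  weak_invariant_expectation_exists_general ρ
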